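/- arXiv:1602.08901 — 2 statements merged into one kernel-verified Lean document; each statement's English description precedes it below -/
import Mathlib

section
/- The maximal total variation distance between elements of two credal sets equals the distance between the corresponding expectation functionals: max_{E₁∈M₁, E₂∈M₂} max_{f∈L₁} |E₁(f) - E₂(f)| = max_{f∈L₁} (E̅₁(f) - E_₂(f)), where E̅₁ is the upper expectation of M₁ and E_₂ the lower expectation of M₂ (using that f ∈ L₁ iff 1 - f ∈ L₁). -/
open Finset Set

noncomputable section

/-- Functions with values in [0,1]. -/
def L1 (X : Type*) : Set (X → ℝ) := {f | ∀ x, 0 ≤ f x ∧ f x ≤ 1}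

/-- Probability mass function on a finite set. -/
def IsPMF {X : Type*} [Fintype X] (p : X → ℝ) : Prop :=
  (∀ x, 0 ≤ p x) ∧ ∑ x, p x = 1

/-- A credal set: nonempty compact convex set of pmfs. -/
def IsCredal {X : Type*} [Fintype X] (M : Set (X → ℝ)) : Prop :=
  M.Nonempty ∧ IsCompact M ∧ Convex ℝ M ∧ ∀ p ∈ M, IsPMF p

/-- Linear expectation with respect to a pmf. -/
def linExp {X : Type*} [Fintype X] (p f : X → ℝ) : ℝ := ∑ x, p x * f x

/-- Upper expectation functional of a credal set. -/
def upperExp {X : Type*} [Fintype X] (M : Set (X → ℝ)) (f : X → ℝ) : ℝ :=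
  sSup ((fun p => linExp p f) '' M)

/-- Lower expectation functional of a credal set. -/
def lowerExp {X : Type*} [Fintype X] (M : Set (X → ℝ)) (f : X → ℝ) : ℝ :=
  sInf ((fun p => linExp p f) '' M)

/-- Chebyshev (sup) distance between functions. -/
def dCheb {X : Type*} (f g : X → ℝ) : ℝ := ⨆ x, |f x - g x|

/-- Distance between two (upper) expectation functionals. -/
def dFun {X : Type*} (F G : (X → ℝ) → ℝ) : ℝ :=
  sSup ((fun f => |F f - G f|) '' L1 X)

/-- Distance between an upper and a lower expectation functional. -/
def dUL {X : Type*} (F G : (X → ℝ) → ℝ) : ℝ :=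
  sSup ((fun f => F f - G f) '' L1 X)

/-- Upper transition operator: rows are upper expectation functionals. -/
def IsUpperTrans {X : Type*} [Fintype X] (T : (X → ℝ) → (X → ℝ)) : Prop :=
  ∃ M : X → Set (X → ℝ), (∀ x, IsCredal (M x)) ∧ ∀ f x, T f x = upperExp (M x) f

/-- Matching pair of upper and lower transition operators from the same credal sets. -/
def IsTransPair {X : Type*} [Fintype X] (T Tl : (X → ℝ) → (X → ℝ)) : Prop :=
  ∃ M : X → Set (X → ℝ), (∀ x, IsCredal (M x)) ∧
    (∀ f x, T f x = upperExp (M x) f) ∧ (∀ f x, Tl f x = lowerExp (M x) f)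

/-- Distance between two (upper) transition operators. -/
def dOp {X : Type*} (T T' : (X → ℝ) → (X → ℝ)) : ℝ :=
  sSup ((fun f => dCheb (T f) (T' f)) '' L1 X)

/-- Imprecision distance between an upper and a lower transition operator. -/
def dOpUL {X : Type*} (T Tl : (X → ℝ) → (X → ℝ)) : ℝ :=
  sSup ((fun f => ⨆ x, (T f x - Tl f x)) '' L1 X)

/-- Weak coefficient of ergodicity. -/
def rho {X : Type*} (T : (X → ℝ) → (X → ℝ)) : ℝ :=
  sSup {r | ∃ f ∈ L1 X, ∃ x y : X, r = |T f x - T f y|}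


lemma linExp_nonneg' {X : Type*} [Fintype X] {p f : X → ℝ} (hp : IsPMF p)
    (hf : f ∈ L1 X) : 0 ≤ linExp p f :=
  Finset.sum_nonneg fun x _ => mul_nonneg (hp.1 x) (hf x).1

lemma linExp_le_one' {X : Type*} [Fintype X] {p f : X → ℝ} (hp : IsPMF p)
    (hf : f ∈ L1 X) : linExp p f ≤ 1 := by
  calc linExp p f ≤ ∑ x, p x :=
        Finset.sum_le_sum fun x _ => mul_le_of_le_one_right (hp.1 x) (hf x).2
    _ = 1 := hp.2

lemma oneSub_mem_L1 {X : Type*} {f : X → ℝ} (hf : f ∈ L1 X) :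
    (fun x => 1 - f x) ∈ L1 X := by
  intro x
  have h := hf x
  dsimp only
  exact ⟨by linarith [h.2], by linarith [h.1]⟩

lemma linExp_oneSub {X : Type*} [Fintype X] {p f : X → ℝ} (hp : IsPMF p) :
    linExp p (fun x => 1 - f x) = 1 - linExp p f := by
  simp only [linExp, mul_sub, mul_one, Finset.sum_sub_distrib, hp.2]

lemma zero_mem_L1 {X : Type*} : (fun _ : X => (0:ℝ)) ∈ L1 X :=
  fun _ => ⟨le_refl 0, zero_le_one⟩

lemma linExp_continuous {X : Type*} [Fintype X] (f : X → ℝ) :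
    Continuous (fun p : X → ℝ => linExp p f) :=
  continuous_finset_sum _ fun x _ => (continuous_apply x).mul continuous_const

theorem stmt5 {X : Type*} [Fintype X] [Nonempty X]
    (M1 M2 : Set (X → ℝ)) (h1 : IsCredal M1) (h2 : IsCredal M2) :
    sSup {r : ℝ | ∃ p1 ∈ M1, ∃ p2 ∈ M2, r = dFun (linExp p1) (linExp p2)} =
      dUL (upperExp M1) (lowerExp M2) := by
  obtain ⟨hne1, hc1, -, hpmf1⟩ := h1
  obtain ⟨hne2, hc2, -, hpmf2⟩ := h2
  -- basic bounds on upperExp / lowerExp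
  have hub : ∀ f ∈ L1 X, upperExp M1 f ≤ 1 := by
    intro f hf
    apply Real.sSup_le _ zero_le_one
    rintro r ⟨p, hp, rfl⟩
    exact linExp_le_one' (hpmf1 p hp) hf
  have hlb : ∀ f ∈ L1 X, 0 ≤ lowerExp M2 f := by
    intro f hf
    apply le_csInf (hne2.image _)
    rintro r ⟨p, hp, rfl⟩
    exact linExp_nonneg' (hpmf2 p hp) hf
  have hUbdd : ∀ f : X → ℝ, BddAbove ((fun p => linExp p f) '' M1) := by
    intro f
    exact ((hc1.image (linExp_continuous f)).isBounded).bddAbove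
  have hLbdd : ∀ f : X → ℝ, BddBelow ((fun p => linExp p f) '' M2) := by
    intro f
    exact ((hc2.image (linExp_continuous f)).isBounded).bddBelow
  have hle_upper : ∀ f, ∀ p ∈ M1, linExp p f ≤ upperExp M1 f := by
    intro f p hp
    exact le_csSup (hUbdd f) ⟨p, hp, rfl⟩
  have hlower_le : ∀ f, ∀ p ∈ M2, lowerExp M2 f ≤ linExp p f := by
    intro f p hp
    exact csInf_le (hLbdd f) ⟨p, hp, rfl⟩
  -- the dUL set is bounded above by 1 and contains elements ≥ 0
  have hdULbdd : BddAbove ((fun f => upperExp M1 f - lowerExp M2 f) '' L1 X) := by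
    refine ⟨1, ?_⟩
    rintro r ⟨f, hf, rfl⟩
    dsimp only
    have := hub f hf; have := hlb f hf; linarith
  have hkey : ∀ f ∈ L1 X, upperExp M1 f - lowerExp M2 f ≤ dUL (upperExp M1) (lowerExp M2) :=
    fun f hf => le_csSup hdULbdd ⟨f, hf, rfl⟩
  have hdUL0 : 0 ≤ dUL (upperExp M1) (lowerExp M2) := by
    have h := hkey _ (zero_mem_L1 (X := X))
    have e1 : upperExp M1 (fun _ => (0:ℝ)) = 0 := by
      apply le_antisymm
      · apply Real.sSup_le _ le_rfl
        rintro r ⟨p, hp, rfl⟩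
        simp [linExp]
      · obtain ⟨p, hp⟩ := hne1
        have := hle_upper (fun _ => (0:ℝ)) p hp
        simpa [linExp] using this
    have e2 : 0 ≤ lowerExp M2 (fun _ => (0:ℝ)) := hlb _ (zero_mem_L1 (X := X))
    have e3 : lowerExp M2 (fun _ => (0:ℝ)) ≤ 0 := by
      obtain ⟨p, hp⟩ := hne2
      have := hlower_le (fun _ => (0:ℝ)) p hp
      simpa [linExp] using this
    rw [e1] at h
    linarith
  -- S is bounded above by 1
  have hSbdd : BddAbove {r : ℝ | ∃ p1 ∈ M1, ∃ p2 ∈ M2, r = dFun (linExp p1) (linExp p2)} := by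
    refine ⟨1, ?_⟩
    rintro r ⟨p1, hp1, p2, hp2, rfl⟩
    apply Real.sSup_le _ zero_le_one
    rintro r ⟨f, hf, rfl⟩
    have a1 := linExp_nonneg' (hpmf1 p1 hp1) hf
    have a2 := linExp_le_one' (hpmf1 p1 hp1) hf
    have b1 := linExp_nonneg' (hpmf2 p2 hp2) hf
    have b2 := linExp_le_one' (hpmf2 p2 hp2) hf
    rw [abs_le]; constructor <;> linarith
  apply le_antisymm
  · apply Real.sSup_le _ hdUL0
    rintro r ⟨p1, hp1, p2, hp2, rfl⟩
    apply Real.sSup_le _ hdUL0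
    rintro r ⟨f, hf, rfl⟩
    dsimp only
    rcases le_total (linExp p2 f) (linExp p1 f) with hcase | hcase
    · rw [abs_of_nonneg (by linarith)]
      have h1 := hle_upper f p1 hp1
      have h2 := hlower_le f p2 hp2
      have := hkey f hf
      linarith
    · rw [abs_of_nonpos (by linarith)]
      set g := fun x => 1 - f x with hg
      have hgL : g ∈ L1 X := oneSub_mem_L1 hf
      have h1 := hle_upper g p1 hp1
      have h2 := hlower_le g p2 hp2
      have e1 : linExp p1 g = 1 - linExp p1 f := linExp_oneSub (hpmf1 p1 hp1)
      have e2 : linExp p2 g = 1 - linExp p2 f := linExp_oneSub (hpmf2 p2 hp2)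
      have := hkey g hgL
      linarith
  · -- ≥ direction
    have hS0 : 0 ≤ sSup {r : ℝ | ∃ p1 ∈ M1, ∃ p2 ∈ M2, r = dFun (linExp p1) (linExp p2)} := by
      obtain ⟨p1, hp1⟩ := hne1
      obtain ⟨p2, hp2⟩ := hne2
      have hmem : dFun (linExp p1) (linExp p2) ∈
          {r : ℝ | ∃ p1 ∈ M1, ∃ p2 ∈ M2, r = dFun (linExp p1) (linExp p2)} :=
        ⟨p1, hp1, p2, hp2, rfl⟩
      have hd0 : 0 ≤ dFun (linExp p1) (linExp p2) := by
        have hbdd : BddAbove ((fun f => |linExp p1 f - linExp p2 f|) '' L1 X) := by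
          refine ⟨1, ?_⟩
          rintro r ⟨f, hf, rfl⟩
          have a1 := linExp_nonneg' (hpmf1 p1 hp1) hf
          have a2 := linExp_le_one' (hpmf1 p1 hp1) hf
          have b1 := linExp_nonneg' (hpmf2 p2 hp2) hf
          have b2 := linExp_le_one' (hpmf2 p2 hp2) hf
          rw [abs_le]; constructor <;> linarith
        have := le_csSup hbdd ⟨(fun _ => (0:ℝ)), zero_mem_L1 (X := X), rfl⟩
        exact le_trans (abs_nonneg _) this
      exact le_trans hd0 (le_csSup hSbdd hmem)
    apply Real.sSup_le _ hS0
    rintro r ⟨f, hf, rfl⟩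
    dsimp only
    obtain ⟨p1, hp1m, hmax⟩ := hc1.exists_isMaxOn hne1 (linExp_continuous f).continuousOn
    obtain ⟨p2, hp2m, hmin⟩ := hc2.exists_isMinOn hne2 (linExp_continuous f).continuousOn
    have e1 : upperExp M1 f ≤ linExp p1 f := by
      apply csSup_le (hne1.image _)
      rintro r ⟨q, hq, rfl⟩
      exact hmax hq
    have e2 : linExp p2 f ≤ lowerExp M2 f := by
      apply le_csInf (hne2.image _)
      rintro r ⟨q, hq, rfl⟩
      exact hmin hq
    have e3 : linExp p1 f - linExp p2 f ≤ |linExp p1 f - linExp p2 f| := le_abs_self _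
    have e4 : |linExp p1 f - linExp p2 f| ≤ dFun (linExp p1) (linExp p2) := by
      have hbdd : BddAbove ((fun f => |linExp p1 f - linExp p2 f|) '' L1 X) := by
        refine ⟨1, ?_⟩
        rintro r ⟨g, hg, rfl⟩
        have a1 := linExp_nonneg' (hpmf1 p1 hp1m) hg
        have a2 := linExp_le_one' (hpmf1 p1 hp1m) hg
        have b1 := linExp_nonneg' (hpmf2 p2 hp2m) hg
        have b2 := linExp_le_one' (hpmf2 p2 hp2m) hg
        rw [abs_le]; constructor <;> linarith
      exact le_csSup hbdd ⟨f, hf, rfl⟩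
    have e5 : dFun (linExp p1) (linExp p2) ≤
        sSup {r : ℝ | ∃ p1 ∈ M1, ∃ p2 ∈ M2, r = dFun (linExp p1) (linExp p2)} :=
      le_csSup hSbdd ⟨p1, hp1m, p2, hp2m, rfl⟩
    linarith
end
end

section
/- Let E̅₁, E̅₂ be upper expectation functionals and T̅ an upper transition operator with weak coefficient of ergodicity ρ(T̅) = max_{x,y∈X} max_{f∈L₁} |T̅(f|x) - T̅(f|y)|. Then d(E̅₁∘T̅, E̅₂∘T̅) ≤ d(E̅₁, E̅₂) · ρ(T̅), where d(E̅₁,E̅₂) = max_{f∈L₁} |E̅₁(f) - E̅₂(f)|. -/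
open Finset Set

noncomputable section

/-! For `f ∈ L₁` the values of `T̅ f` lie in an interval `[m, m + ρ(T̅)]`, so `T̅ f = ρ(T̅) • g + m`
for some `g ∈ L₁`. Upper expectations are positively homogeneous and commute with adding
constants, hence `|E̅₁(T̅ f) - E̅₂(T̅ f)| = ρ(T̅) |E̅₁ g - E̅₂ g| ≤ ρ(T̅) d(E̅₁, E̅₂)`. -/

section

variable {X : Type*}

lemma zero_mem_L1_s8 : (0 : X → ℝ) ∈ L1 X := fun _ => ⟨le_rfl, zero_le_one⟩

lemma exists_mem_L1_eq_affine [Finite X] {h : X → ℝ} {r : ℝ} (hr : 0 ≤ r)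
    (hh : ∀ x y, |h x - h y| ≤ r) : ∃ g ∈ L1 X, ∃ m : ℝ, h = fun x => r * g x + m := by
  rcases isEmpty_or_nonempty X with _ | _
  · exact ⟨0, zero_mem_L1_s8, 0, funext isEmptyElim⟩
  obtain ⟨y, hy⟩ := Finite.exists_min h
  have hdiff : ∀ x, 0 ≤ h x - h y ∧ h x - h y ≤ r := fun x =>
    ⟨sub_nonneg.2 (hy x), (le_abs_self _).trans (hh x y)⟩
  refine ⟨fun x => (h x - h y) / r,
    fun x => ⟨div_nonneg (hdiff x).1 hr, div_le_one_of_le₀ (hdiff x).2 hr⟩, h y, funext fun x => ?_⟩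
  rcases hr.eq_or_lt with rfl | hpos
  · simp only [zero_mul, zero_add]
    linarith [hdiff x]
  · rw [mul_div_cancel₀ _ hpos.ne']
    ring

lemma rho_nonneg (T : (X → ℝ) → (X → ℝ)) : 0 ≤ rho T :=
  Real.sSup_nonneg <| by
    rintro _ ⟨f, -, x, y, rfl⟩
    exact abs_nonneg _

variable [Fintype X]

lemma continuous_linExp (f : X → ℝ) : Continuous fun p : X → ℝ => linExp p f :=
  continuous_finsetSum _ fun x _ => (continuous_apply x).mul continuous_const

lemma IsPMF.linExp_mem_Icc {p f : X → ℝ} (hp : IsPMF p) (hf : f ∈ L1 X) :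
    linExp p f ∈ Set.Icc 0 1 := by
  refine ⟨Finset.sum_nonneg fun x _ => mul_nonneg (hp.1 x) (hf x).1, ?_⟩
  calc linExp p f ≤ ∑ x, p x * 1 :=
        Finset.sum_le_sum fun x _ => mul_le_mul_of_nonneg_left (hf x).2 (hp.1 x)
    _ = 1 := by simp [hp.2]

lemma IsPMF.linExp_affine {p : X → ℝ} (hp : IsPMF p) (f : X → ℝ) (a b : ℝ) :
    linExp p (fun x => a * f x + b) = a * linExp p f + b := by
  simp only [linExp, mul_add, mul_left_comm (p _) a, Finset.sum_add_distrib, ← Finset.mul_sum,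
    ← Finset.sum_mul, hp.2, one_mul]

namespace IsCredal

variable {M : Set (X → ℝ)}

lemma upperExp_mem_Icc (hM : IsCredal M) {f : X → ℝ} (hf : f ∈ L1 X) :
    upperExp M f ∈ Set.Icc 0 1 := by
  have hle : ∀ t ∈ (fun p => linExp p f) '' M, t ∈ Set.Icc (0 : ℝ) 1 := by
    rintro _ ⟨p, hp, rfl⟩
    exact (hM.2.2.2 p hp).linExp_mem_Icc hf
  obtain ⟨p, hp⟩ := hM.1
  refine ⟨?_, csSup_le (hM.1.image _) fun t ht => (hle t ht).2⟩
  exact (hle _ ⟨p, hp, rfl⟩).1.trans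
    (le_csSup ⟨1, fun t ht => (hle t ht).2⟩ ⟨p, hp, rfl⟩)

lemma upperExp_affine (hM : IsCredal M) (f : X → ℝ) {a : ℝ} (ha : 0 ≤ a) (b : ℝ) :
    upperExp M (fun x => a * f x + b) = a * upperExp M f + b := by
  have himage : (fun p => linExp p (fun x => a * f x + b)) '' M =
      (fun t => a * t + b) '' ((fun p => linExp p f) '' M) := by
    rw [Set.image_image]
    exact Set.image_congr fun p hp => (hM.2.2.2 p hp).linExp_affine f a b
  rw [upperExp, upperExp, himage]
  exact ((Monotone.map_csSup_of_continuousAt (by fun_prop)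
    (fun s t hst => by gcongr) (hM.1.image _)
    (hM.2.1.bddAbove_image (continuous_linExp f).continuousOn))).symm

end IsCredal

lemma IsUpperTrans.mem_L1 {T : (X → ℝ) → (X → ℝ)} (hT : IsUpperTrans T) {f : X → ℝ}
    (hf : f ∈ L1 X) : T f ∈ L1 X := by
  obtain ⟨M, hM, hTM⟩ := hT
  intro x
  rw [hTM f x]
  exact (hM x).upperExp_mem_Icc hf

lemma IsUpperTrans.abs_sub_le_rho {T : (X → ℝ) → (X → ℝ)} (hT : IsUpperTrans T)
    {f : X → ℝ} (hf : f ∈ L1 X) (x y : X) : |T f x - T f y| ≤ rho T := by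
  refine le_csSup ⟨1, ?_⟩ ⟨f, hf, x, y, rfl⟩
  rintro _ ⟨f, hf, x, y, rfl⟩
  exact abs_sub_le_of_nonneg_of_le (hT.mem_L1 hf x).1 (hT.mem_L1 hf x).2
    (hT.mem_L1 hf y).1 (hT.mem_L1 hf y).2

lemma abs_upperExp_affine_sub_le {M₁ M₂ : Set (X → ℝ)} (h₁ : IsCredal M₁) (h₂ : IsCredal M₂)
    {g : X → ℝ} (hg : g ∈ L1 X) {r : ℝ} (hr : 0 ≤ r) (m : ℝ) :
    |upperExp M₁ (fun x => r * g x + m) - upperExp M₂ (fun x => r * g x + m)| ≤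
      dFun (upperExp M₁) (upperExp M₂) * r := by
  have hbdd : BddAbove ((fun f => |upperExp M₁ f - upperExp M₂ f|) '' L1 X) := by
    refine ⟨1, ?_⟩
    rintro _ ⟨f, hf, rfl⟩
    exact abs_sub_le_of_nonneg_of_le (h₁.upperExp_mem_Icc hf).1 (h₁.upperExp_mem_Icc hf).2
      (h₂.upperExp_mem_Icc hf).1 (h₂.upperExp_mem_Icc hf).2
  rw [h₁.upperExp_affine g hr, h₂.upperExp_affine g hr, add_sub_add_right_eq_sub, ← mul_sub,
    abs_mul, abs_of_nonneg hr, mul_comm]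
  exact mul_le_mul_of_nonneg_right (le_csSup hbdd ⟨g, hg, rfl⟩) hr

end

theorem stmt8_general {X : Type*} [Fintype X]
    (M1 M2 : Set (X → ℝ)) (h1 : IsCredal M1) (h2 : IsCredal M2)
    (T : (X → ℝ) → (X → ℝ)) (hT : IsUpperTrans T) :
    dFun (fun f => upperExp M1 (T f)) (fun f => upperExp M2 (T f)) ≤
      dFun (upperExp M1) (upperExp M2) * rho T := by
  refine csSup_le (Set.Nonempty.image _ ⟨0, zero_mem_L1_s8⟩) ?_
  rintro _ ⟨f, hf, rfl⟩
  obtain ⟨g, hg, m, hTf⟩ := exists_mem_L1_eq_affine (rho_nonneg T) (hT.abs_sub_le_rho hf)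
  dsimp only
  rw [hTf]
  exact abs_upperExp_affine_sub_le h1 h2 hg (rho_nonneg T) m

theorem stmt8 {X : Type*} [Fintype X] [Nonempty X]
    (M1 M2 : Set (X → ℝ)) (h1 : IsCredal M1) (h2 : IsCredal M2)
    (T : (X → ℝ) → (X → ℝ)) (hT : IsUpperTrans T) :
    dFun (fun f => upperExp M1 (T f)) (fun f => upperExp M2 (T f)) ≤
      dFun (upperExp M1) (upperExp M2) * rho T :=
  stmt8_general M1 M2 h1 h2 T hT
end
end
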